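/- Let τ be the permutation of {1,…,rn} given by the cyclic shift by n, i.e., τ(i) ≡ i + n (mod rn), acting on the tensor power (V^{⊗n})^{⊗r} = V^{⊗rn} by permuting tensor factors, and let M^μ ⊂ V^{⊗rn} be the weight subspace spanned by basis tensors v_{i₁}⊗⋯⊗v_{i_{rn}} in which v_j appears exactly μ_j times. Then the trace of τ restricted to (p^{⊗r} V^{⊗rn}) ∩ M^μ equals dim(p V^{⊗n} ∩ M^{μ/r}) if all parts of μ are divisible by r (where μ/r = (μ₁/r, μ₂/r, …)), and equals 0 otherwise. Here p is any idempotent acting on V^{⊗n}. -/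

import Mathlib

open Finset
set_option linter.unusedSectionVars false
set_option linter.unusedVariables false
set_option maxHeartbeats 1000000
section Generic
set_option linter.unusedSectionVars false
variable {σ : Type*} [Fintype σ] [DecidableEq σ]

noncomputable def suppSub (S : Set σ) : Submodule ℂ (σ → ℂ) where
  carrier := {x | ∀ f, f ∉ S → x f = 0}
  add_mem' := by intro a b ha hb f hf; simp [ha f hf, hb f hf]
  zero_mem' := by intro f _; rfl
  smul_mem' := by intro c x hx f hf; simp [hx f hf]

lemma mem_suppSub {S : Set σ} {x : σ → ℂ} : x ∈ suppSub S ↔ ∀ f, f ∉ S → x f = 0 :=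
  Iff.rfl

lemma single_expansion (z : σ → ℂ) : z = ∑ d : σ, z d • (Pi.single d (1 : ℂ) : σ → ℂ) := by
  funext e
  rw [Finset.sum_apply]
  simp [Pi.single_apply]

lemma span_single_eq_suppSub (S : Set σ) :
    Submodule.span ℂ ((fun f => Pi.single f (1 : ℂ)) '' S) = suppSub S := by
  apply le_antisymm
  · rw [Submodule.span_le]
    rintro _ ⟨f, hf, rfl⟩ g hg
    refine Pi.single_eq_of_ne (fun h : g = f => hg (by rw [h]; exact hf)) 1
  · intro x hx
    rw [single_expansion x]
    apply Submodule.sum_mem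
    intro f _
    by_cases hf : f ∈ S
    · exact Submodule.smul_mem _ _ (Submodule.subset_span ⟨f, hf, rfl⟩)
    · rw [hx f hf, zero_smul]; exact Submodule.zero_mem _

lemma exists_proj (B : Submodule ℂ (σ → ℂ)) :
    ∃ π : (σ → ℂ) →ₗ[ℂ] (σ → ℂ), (∀ z, π z ∈ B) ∧ ∀ z ∈ B, π z = z := by
  obtain ⟨q, hq⟩ := Submodule.exists_isCompl B
  refine ⟨B.subtype ∘ₗ (B.projectionOnto q hq), fun z => by simp, fun z hz => by
    simp [Submodule.projectionOnto_apply_left hq ⟨z, hz⟩, Submodule.projection_apply_left hq ⟨z, hz⟩]⟩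

variable {ι : Type*} [Fintype ι] [DecidableEq ι]

def mulT (y : ι → σ → ℂ) : (ι → σ) → ℂ := fun F => ∏ b, y b (F b)

lemma prod_ite_eq_funeq (F G : ι → σ) :
    (∏ b : ι, if F b = G b then (1 : ℂ) else 0) = if F = G then 1 else 0 := by
  by_cases h : F = G
  · simp [h]
  · obtain ⟨b, hb⟩ := Function.ne_iff.mp h
    rw [if_neg h]
    exact Finset.prod_eq_zero (Finset.mem_univ b) (if_neg hb)

/-- Multilinear expansion of `mulT`. -/
lemma mulT_expand {κ : ι → Type*} [∀ b, Fintype (κ b)] (c : ∀ b, κ b → ℂ)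
    (v : ∀ b, κ b → σ → ℂ) :
    mulT (fun b => ∑ k, c b k • v b k) =
      ∑ k : (∀ b, κ b), (∏ b, c b (k b)) • mulT (fun b => v b (k b)) := by
  funext F
  rw [Finset.sum_apply]
  simp only [mulT, Pi.smul_apply, smul_eq_mul, Finset.sum_apply]
  rw [← Fintype.piFinset_univ, Finset.prod_univ_sum]
  exact Finset.sum_congr rfl fun k _ => by rw [Finset.prod_mul_distrib]
/-- Core lemma: if every slot-column of `x` lies in `C b`, then `x` lies in the span of
elementary products with factors in the `C b`. -/
theorem mem_span_mulT (C : ι → Submodule ℂ (σ → ℂ)) (x : (ι → σ) → ℂ)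
    (hcol : ∀ (b : ι) (G : ι → σ), (fun h => x (Function.update G b h)) ∈ C b) :
    x ∈ Submodule.span ℂ {z | ∃ y : ι → σ → ℂ, (∀ b, y b ∈ C b) ∧ z = mulT y} := by
  classical
  choose π hπmem hπfix using fun b => exists_proj (C b)
  set m : ι → σ → σ → ℂ := fun b e d => π b (Pi.single d 1) e with hm
  have hπ_apply : ∀ (b : ι) (z : σ → ℂ) (e : σ), π b z e = ∑ d, m b e d * z d := by
    intro b z e
    conv_lhs => rw [single_expansion z]
    rw [map_sum, Finset.sum_apply]
    exact Finset.sum_congr rfl fun d _ => by simp [m, mul_comm]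
  have key : ∀ S : Finset ι, ∀ F : ι → σ, (∑ G : ι → σ,
      (∏ b ∈ S, m b (F b) (G b)) * ((∏ b ∈ Sᶜ, if F b = G b then (1:ℂ) else 0) * x G)) = x F := by
    intro S
    induction S using Finset.induction_on with
    | empty =>
      intro F
      simp only [Finset.prod_empty, one_mul, Finset.compl_empty]
      rw [Finset.sum_eq_single F]
      · rw [prod_ite_eq_funeq, if_pos rfl, one_mul]
      · intro G _ hG
        rw [prod_ite_eq_funeq, if_neg (fun h => hG h.symm), zero_mul]
      · intro h; exact absurd (Finset.mem_univ F) h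
    | @insert a S ha ih =>
      intro F
      have step : (∑ d : σ, m a (F a) d * (∑ G : ι → σ,
              (∏ b ∈ S, m b (Function.update F a d b) (G b)) *
                ((∏ b ∈ Sᶜ, if Function.update F a d b = G b then (1:ℂ) else 0) * x G)))
          = ∑ G : ι → σ,
          (∏ b ∈ insert a S, m b (F b) (G b)) *
            ((∏ b ∈ (insert a S)ᶜ, if F b = G b then (1:ℂ) else 0) * x G) := by
        have h1 : ∀ (d : σ) (G : ι → σ), (∏ b ∈ S, m b (Function.update F a d b) (G b))
            = ∏ b ∈ S, m b (F b) (G b) :=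
          fun d G => Finset.prod_congr rfl fun b hb =>
            by rw [Function.update_of_ne (fun h : b = a => ha (by rw [← h]; exact hb))]
        have h2 : ∀ (d : σ) (G : ι → σ),
            (∏ b ∈ Sᶜ, if Function.update F a d b = G b then (1:ℂ) else 0)
            = (if d = G a then (1:ℂ) else 0) *
                ∏ b ∈ (insert a S)ᶜ, if F b = G b then (1:ℂ) else 0 := by
          intro d G
          have haS : a ∈ Sᶜ := Finset.mem_compl.mpr ha
          rw [← Finset.mul_prod_erase Sᶜ _ haS, Function.update_self, Finset.compl_insert]
          congr 1
          refine Finset.prod_congr rfl fun b hb => ?_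
          rw [Function.update_of_ne (Finset.ne_of_mem_erase hb)]
        have hmain : ∀ d : σ, m a (F a) d * (∑ G : ι → σ,
              (∏ b ∈ S, m b (Function.update F a d b) (G b)) *
                ((∏ b ∈ Sᶜ, if Function.update F a d b = G b then (1:ℂ) else 0) * x G))
            = ∑ G : ι → σ, (if d = G a then (1:ℂ) else 0) *
                (m a (F a) d * ((∏ b ∈ S, m b (F b) (G b)) *
                  ((∏ b ∈ (insert a S)ᶜ, if F b = G b then (1:ℂ) else 0) * x G))) := by
          intro d
          rw [Finset.mul_sum]
          exact Finset.sum_congr rfl fun G _ => by rw [h1 d G, h2 d G]; ring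
        rw [Finset.sum_congr rfl (fun d _ => hmain d), Finset.sum_comm]
        refine Finset.sum_congr rfl fun G _ => ?_
        rw [Finset.sum_eq_single (G a)]
        · rw [if_pos rfl, Finset.prod_insert ha]
          ring
        · intro d _ hd
          rw [if_neg hd]
          ring
        · intro h; exact absurd (Finset.mem_univ (G a)) h
      rw [← step]
      have step2 : ∀ d : σ, (∑ G : ι → σ,
          (∏ b ∈ S, m b (Function.update F a d b) (G b)) *
            ((∏ b ∈ Sᶜ, if Function.update F a d b = G b then (1:ℂ) else 0) * x G))
          = x (Function.update F a d) := fun d => ih (Function.update F a d)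
      rw [Finset.sum_congr rfl (fun d _ => by rw [step2 d])]
      have : ∑ d : σ, m a (F a) d * x (Function.update F a d)
          = π a (fun h => x (Function.update F a h)) (F a) := (hπ_apply a _ (F a)).symm
      rw [this, hπfix a _ (hcol a F)]
      show x (Function.update F a (F a)) = x F
      rw [Function.update_eq_self]
  -- conclude
  have hx : x = ∑ G : ι → σ, x G • mulT (fun b e => m b e (G b)) := by
    funext F
    rw [Finset.sum_apply, ← key Finset.univ F]
    refine Finset.sum_congr rfl fun G _ => ?_
    simp only [Finset.compl_univ, Finset.prod_empty, one_mul, mulT, Pi.smul_apply, smul_eq_mul]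
    ring
  rw [hx]
  exact Submodule.sum_mem _ fun G _ => Submodule.smul_mem _ _
    (Submodule.subset_span ⟨fun b e => m b e (G b), fun b => hπmem b _, rfl⟩)
/-- Dual family for a linearly independent family. -/
lemma exists_dual_family {K : Type*} [DecidableEq K] (w : K → σ → ℂ) (hw : LinearIndependent ℂ w) :
    ∃ φ : K → ((σ → ℂ) →ₗ[ℂ] ℂ), ∀ k l, φ k (w l) = if l = k then 1 else 0 := by
  classical
  set Bs := Module.Basis.span hw with hBs
  obtain ⟨q, hq⟩ := Submodule.exists_isCompl (Submodule.span ℂ (Set.range w))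
  refine ⟨fun k => (Bs.coord k) ∘ₗ ((Submodule.span ℂ (Set.range w)).projectionOnto q hq),
    fun k l => ?_⟩
  have h1 : ((Submodule.span ℂ (Set.range w)).projectionOnto q hq) (w l)
      = Bs l := by
    have : (w l) ∈ Submodule.span ℂ (Set.range w) :=
      Submodule.subset_span (Set.mem_range_self l)
    rw [show w l = ((⟨w l, this⟩ : Submodule.span ℂ (Set.range w)) : σ → ℂ) from rfl,
      Submodule.projectionOnto_apply_left hq]
    exact (Module.Basis.span_apply hw l).symm
  simp only [LinearMap.comp_apply, h1, Module.Basis.coord_apply, Module.Basis.repr_self_apply]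

/-- Products of an independent family over each slot are independent. -/
theorem linearIndependent_mulT {K : Type*} [Fintype K] [DecidableEq K] (w : K → σ → ℂ)
    (hw : LinearIndependent ℂ w) :
    LinearIndependent ℂ (fun k : ι → K => mulT (fun b => w (k b))) := by
  classical
  obtain ⟨φ, hφ⟩ := exists_dual_family w hw
  rw [Fintype.linearIndependent_iff]
  intro g hg khat
  set β : ι → σ → ℂ := fun b d => φ (khat b) (Pi.single d 1) with hβ
  set Λ : ((ι → σ) → ℂ) →ₗ[ℂ] ℂ :=
    { toFun := fun z => ∑ F : ι → σ, (∏ b, β b (F b)) * z F,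
      map_add' := fun u v => by
        simp only [Pi.add_apply, mul_add, Finset.sum_add_distrib]
      map_smul' := fun c u => by
        simp only [Pi.smul_apply, smul_eq_mul, RingHom.id_apply, Finset.mul_sum]
        exact Finset.sum_congr rfl fun F _ => by ring } with hΛdef
  have hφ_apply : ∀ (b : ι) (z : σ → ℂ), φ (khat b) z = ∑ d, β b d * z d := by
    intro b z
    conv_lhs => rw [single_expansion z]
    rw [map_sum]
    exact Finset.sum_congr rfl fun d _ => by simp [β, mul_comm]
  have hΛ : ∀ y : ι → σ → ℂ, Λ (mulT y) = ∏ b, φ (khat b) (y b) := by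
    intro y
    show (∑ F : ι → σ, (∏ b, β b (F b)) * mulT y F) = _
    have : ∀ F : ι → σ, (∏ b, β b (F b)) * mulT y F = ∏ b, (β b (F b) * y b (F b)) := by
      intro F; rw [mulT, Finset.prod_mul_distrib]
    rw [Finset.sum_congr rfl fun F _ => this F]
    have hR : (∏ b, φ (khat b) (y b))
        = ∑ F ∈ Fintype.piFinset (fun _ : ι => (Finset.univ : Finset σ)),
            ∏ b, β b (F b) * y b (F b) := by
      rw [Finset.prod_congr rfl (fun b _ => hφ_apply b (y b)), Finset.prod_univ_sum]
    rw [hR, Fintype.piFinset_univ]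
  have h0 := congrArg Λ hg
  rw [map_sum, map_zero] at h0
  have h1 : ∀ k : ι → K, Λ (g k • mulT fun b => w (k b)) = g k * ∏ b, if k b = khat b then (1:ℂ) else 0 := by
    intro k
    rw [map_smul, hΛ, smul_eq_mul]
    congr 1
    exact Finset.prod_congr rfl fun b _ => hφ (khat b) (k b)
  rw [Finset.sum_congr rfl fun k _ => h1 k] at h0
  rw [Finset.sum_congr rfl (fun k _ => by rw [prod_ite_eq_funeq k khat])] at h0
  rw [Finset.sum_eq_single khat] at h0
  · rw [if_pos rfl, mul_one] at h0; exact h0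
  · intro k _ hk; rw [if_neg hk, mul_zero]
  · intro h; exact absurd (Finset.mem_univ khat) h

end Generic


open Finset

/-- The index `(b, i) ↦ b·n + i : Fin (r·n)`, decomposing `V^{⊗rn}` into `r`
blocks of `n` tensor factors. -/
def blockIdx (r n : ℕ) (b : Fin r) (i : Fin n) : Fin (r * n) :=
  ⟨(b : ℕ) * n + i, by
    calc (b : ℕ) * n + (i : ℕ) < (b : ℕ) * n + n := by have := i.isLt; omega
      _ = ((b : ℕ) + 1) * n := by ring
      _ ≤ r * n := Nat.mul_le_mul_right n b.isLt⟩

/-- The cyclic shift by `n` on `Fin (r·n)`: `a ↦ a + n (mod r·n)`. -/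
def cshift (r n : ℕ) (h : 0 < r * n) (a : Fin (r * n)) : Fin (r * n) :=
  ⟨((a : ℕ) + n) % (r * n), Nat.mod_lt _ h⟩

/-- The number of occurrences of the basis index `j` in the sequence `f`
(modeling the weight of the basis tensor `v_{f 0} ⊗ ⋯ ⊗ v_{f (m-1)}`). -/
def weightOf {m N : ℕ} (f : Fin m → Fin N) (j : Fin N) : ℕ :=
  (Finset.univ.filter fun i => f i = j).card

/-- The weight subspace `M^μ ⊆ V^{⊗m}`, spanned by the basis tensors in which
`v_j` appears exactly `μ j` times.  Here `V^{⊗m}` is modeled as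
`(Fin m → Fin N) → ℂ` with basis the elementary tensors `Pi.single f 1`. -/
noncomputable def wtSpace (m N : ℕ) (μ : Fin N → ℕ) : Submodule ℂ ((Fin m → Fin N) → ℂ) :=
  Submodule.span ℂ ((fun f => Pi.single f (1 : ℂ)) ''
    {f : Fin m → Fin N | ∀ j, weightOf f j = μ j})

/-- The matrix of `p^{⊗r}` acting on `V^{⊗rn}`, where `p` is given by its matrix
in the basis of elementary tensors of `V^{⊗n}`. -/
def tensorPowMatrix (r n N : ℕ) (p : Matrix (Fin n → Fin N) (Fin n → Fin N) ℂ) :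
    Matrix (Fin (r * n) → Fin N) (Fin (r * n) → Fin N) ℂ :=
  fun f g => ∏ b : Fin r,
    p (fun i => f (blockIdx r n b i)) (fun i => g (blockIdx r n b i))

/-- The operator `τ` on `V^{⊗rn}` permuting the tensor factors by the cyclic
shift `i ↦ i + n (mod rn)`. -/
def tauOp (r n N : ℕ) (h : 0 < r * n) :
    ((Fin (r * n) → Fin N) → ℂ) →ₗ[ℂ] ((Fin (r * n) → Fin N) → ℂ) :=
  LinearMap.funLeft ℂ ℂ (fun f : Fin (r * n) → Fin N => f ∘ cshift r n h)

section Infra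

variable {r n N : ℕ}

/-- The `b`-th block of `f`. -/
def blockOf (r n : ℕ) {N : ℕ} (f : Fin (r * n) → Fin N) (b : Fin r) : Fin n → Fin N :=
  fun i => f (blockIdx r n b i)

/-- Inverse of `blockIdx`. -/
def invIdx (r n : ℕ) (hn : 0 < n) (a : Fin (r * n)) : Fin r × Fin n :=
  ⟨⟨(a : ℕ) / n, (Nat.div_lt_iff_lt_mul hn).mpr a.isLt⟩,
   ⟨(a : ℕ) % n, Nat.mod_lt _ hn⟩⟩

lemma invIdx_blockIdx (hn : 0 < n) (b : Fin r) (i : Fin n) :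
    invIdx r n hn (blockIdx r n b i) = (b, i) := by
  have hi := i.isLt
  unfold invIdx blockIdx
  ext
  · show ((b : ℕ) * n + (i : ℕ)) / n = b
    rw [Nat.add_comm, Nat.add_mul_div_right _ _ hn, Nat.div_eq_of_lt hi, Nat.zero_add]
  · show ((b : ℕ) * n + (i : ℕ)) % n = i
    rw [Nat.add_comm, Nat.add_mul_mod_self_right, Nat.mod_eq_of_lt hi]

lemma blockIdx_invIdx (hn : 0 < n) (a : Fin (r * n)) :
    blockIdx r n (invIdx r n hn a).1 (invIdx r n hn a).2 = a := by
  unfold invIdx blockIdx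
  ext
  show (a : ℕ) / n * n + (a : ℕ) % n = a
  rw [Nat.mul_comm]
  exact Nat.div_add_mod _ _

/-- The pair-index equivalence. -/
def eIdx (r n : ℕ) (hn : 0 < n) : Fin r × Fin n ≃ Fin (r * n) where
  toFun p := blockIdx r n p.1 p.2
  invFun := invIdx r n hn
  left_inv p := invIdx_blockIdx hn p.1 p.2
  right_inv a := blockIdx_invIdx hn a

/-- The block-decomposition equivalence on sequences. -/
def eGl (r n N : ℕ) (hn : 0 < n) : (Fin (r * n) → Fin N) ≃ (Fin r → Fin n → Fin N) where
  toFun f := fun b i => f (blockIdx r n b i)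
  invFun F := fun a => F (invIdx r n hn a).1 (invIdx r n hn a).2
  left_inv f := by funext a; simp only [blockIdx_invIdx hn a]
  right_inv F := by
    funext b i
    simp only [invIdx_blockIdx hn b i]

lemma eGl_apply (hn : 0 < n) (f : Fin (r * n) → Fin N) : eGl r n N hn f = blockOf r n f := rfl

lemma blockOf_eGl_symm (hn : 0 < n) (F : Fin r → Fin n → Fin N) :
    blockOf r n ((eGl r n N hn).symm F) = F := by
  rw [← eGl_apply hn, Equiv.apply_symm_apply]

/-- Weight is additive over blocks. -/
lemma weightOf_blocks (hn : 0 < n) (f : Fin (r * n) → Fin N) (j : Fin N) :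
    weightOf f j = ∑ b : Fin r, weightOf (blockOf r n f b) j := by
  unfold weightOf
  rw [Finset.card_filter]
  rw [← Fintype.sum_equiv (eIdx r n hn)
    (fun q => if f (blockIdx r n q.1 q.2) = j then 1 else 0)
    (fun a => if f a = j then 1 else 0) (fun q => rfl)]
  rw [Fintype.sum_prod_type]
  exact Finset.sum_congr rfl fun b _ => by rw [Finset.card_filter]; rfl

/-- `cshift` shifts blocks cyclically. -/
lemma cshift_blockIdx (hr : 0 < r) (hn : 0 < n) (b : Fin r) (i : Fin n) :
    cshift r n (Nat.mul_pos hr hn) (blockIdx r n b i)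
      = blockIdx r n (b + ⟨1 % r, Nat.mod_lt _ hr⟩) i := by
  have hi := i.isLt
  have hb := b.isLt
  unfold cshift blockIdx
  ext
  show ((b : ℕ) * n + i + n) % (r * n) = (((b : ℕ) + 1 % r) % r) * n + i
  rcases (by omega : (b : ℕ) + 1 < r ∨ (b : ℕ) + 1 = r) with hc | hc
  · have h2 : 2 ≤ r := by omega
    have h1 : 1 % r = 1 := Nat.mod_eq_of_lt h2
    rw [h1, Nat.mod_eq_of_lt hc]
    have hlt : (b : ℕ) * n + i + n < r * n := by
      have : (b : ℕ) * n + i + n < ((b : ℕ) + 2) * n := by ring_nf; omega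
      exact lt_of_lt_of_le this (Nat.mul_le_mul_right n (by omega))
    rw [Nat.mod_eq_of_lt hlt]
    ring
  · have h0 : ((b : ℕ) + 1 % r) % r = 0 := by
      rcases (by omega : r = 1 ∨ 2 ≤ r) with h | h
      · subst h; simp [Nat.mod_one]
      · rw [Nat.mod_eq_of_lt h, hc, Nat.mod_self]
    rw [h0, Nat.zero_mul, Nat.zero_add]
    have heq : (b : ℕ) * n + i + n = r * n + i := by
      have : ((b : ℕ) + 1) * n = r * n := by rw [hc]
      ring_nf
      ring_nf at this
      omega
    rw [heq, Nat.add_mod_left]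
    exact Nat.mod_eq_of_lt (lt_of_lt_of_le hi (Nat.le_mul_of_pos_left n hr))

lemma toLin'_point {m k : Type*} [Fintype m] [Fintype k] [DecidableEq k]
    (M : Matrix m k ℂ) (v : k → ℂ) (i : m) :
    Matrix.toLin' M v i = ∑ j, M i j * v j := by
  rw [Matrix.toLin'_apply]
  rfl

end Infra
section Main

variable (r n N : ℕ) (p : Matrix (Fin n → Fin N) (Fin n → Fin N) ℂ)

lemma wtSpace_eq_suppSub (m : ℕ) (μ : Fin N → ℕ) :
    wtSpace m N μ = suppSub {f : Fin m → Fin N | ∀ j, weightOf f j = μ j} :=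
  span_single_eq_suppSub _

/-- Realizable weights. -/
def Wt (n N : ℕ) : Finset (Fin N → ℕ) :=
  Finset.image (fun h : Fin n → Fin N => (weightOf h : Fin N → ℕ)) Finset.univ

/-- The weight-`γ` part of the range of `p`. -/
noncomputable def Bsub (γ : Fin N → ℕ) : Submodule ℂ ((Fin n → Fin N) → ℂ) :=
  LinearMap.range (Matrix.toLin' p) ⊓ wtSpace n N γ

noncomputable def dd (γ : Fin N → ℕ) : ℕ := Module.finrank ℂ (Bsub n N p γ)

/-- Index type for the basis of the intersection: a weight together with a basis
index of the corresponding weight part. -/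
abbrev Ktype : Type := Σ γ : {γ : Fin N → ℕ // γ ∈ Wt n N}, Fin (dd n N p γ.1)

/-- Basis vectors of the weight parts of the range of `p`. -/
noncomputable def wfun (k : Ktype n N p) : (Fin n → Fin N) → ℂ :=
  ((Module.finBasis ℂ (Bsub n N p k.1.1)) k.2 : (Fin n → Fin N) → ℂ)

lemma wfun_mem_Bsub (k : Ktype n N p) : wfun n N p k ∈ Bsub n N p k.1.1 :=
  SetLike.coe_mem _

lemma wfun_mem_range (k : Ktype n N p) :
    wfun n N p k ∈ LinearMap.range (Matrix.toLin' p) := by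
  have h := wfun_mem_Bsub n N p k
  unfold Bsub at h
  exact (Submodule.mem_inf.mp h).1

lemma wfun_supp (k : Ktype n N p) (h : Fin n → Fin N)
    (hh : (weightOf h : Fin N → ℕ) ≠ k.1.1) : wfun n N p k h = 0 := by
  have hmem : wfun n N p k ∈ wtSpace n N k.1.1 := by
    have h := wfun_mem_Bsub n N p k
    unfold Bsub at h
    exact (Submodule.mem_inf.mp h).2
  rw [wtSpace_eq_suppSub, mem_suppSub] at hmem
  exact hmem h (fun hc => hh (funext hc))

/-- The per-weight basis elements, taken together, are linearly independent. -/
lemma wfun_indep : LinearIndependent ℂ (wfun n N p) := by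
  rw [Fintype.linearIndependent_iff]
  intro g hg khat
  obtain ⟨⟨γh, hγh⟩, mh⟩ := khat
  have hsub : ∀ h : Fin n → Fin N,
      (∑ m : Fin (dd n N p γh), g ⟨⟨γh, hγh⟩, m⟩ * wfun n N p ⟨⟨γh, hγh⟩, m⟩ h) = 0 := by
    intro h
    by_cases hw : (weightOf h : Fin N → ℕ) = γh
    · have h0 := congrFun hg h
      rw [Finset.sum_apply] at h0
      simp only [Pi.smul_apply, smul_eq_mul, Pi.zero_apply] at h0
      rw [← Finset.univ_sigma_univ, Finset.sum_sigma] at h0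
      rw [Finset.sum_eq_single (⟨γh, hγh⟩ : {γ : Fin N → ℕ // γ ∈ Wt n N})] at h0
      · exact h0
      · intro γ' _ hγ'
        refine Finset.sum_eq_zero fun m _ => ?_
        have : (weightOf h : Fin N → ℕ) ≠ γ'.1 := by
          rw [hw]
          exact fun hc => hγ' (Subtype.ext hc.symm)
        rw [wfun_supp n N p ⟨γ', m⟩ h this, mul_zero]
      · intro hno; exact absurd (Finset.mem_univ _) hno
    · refine Finset.sum_eq_zero fun m _ => ?_
      rw [wfun_supp n N p ⟨⟨γh, hγh⟩, m⟩ h hw, mul_zero]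
  have hv : (∑ m : Fin (dd n N p γh), g ⟨⟨γh, hγh⟩, m⟩ •
      (Module.finBasis ℂ (Bsub n N p γh)) m) = 0 := by
    have hcoe : ((∑ m : Fin (dd n N p γh), g ⟨⟨γh, hγh⟩, m⟩ •
        (Module.finBasis ℂ (Bsub n N p γh)) m : Bsub n N p γh) : (Fin n → Fin N) → ℂ) = 0 := by
      push_cast
      funext h
      rw [Finset.sum_apply]
      simpa [wfun] using hsub h
    exact_mod_cast Subtype.ext hcoe
  exact Fintype.linearIndependent_iff.mp
    (Module.finBasis ℂ (Bsub n N p γh)).linearIndependent _ hv mh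

variable (μ : Fin N → ℕ)

/-- Index type for the basis of the big intersection. -/
abbrev Itype : Type :=
  {κ : Fin r → Ktype n N p // (∑ b, ((κ b).1.1 : Fin N → ℕ)) = μ}

/-- The basis family of the big intersection. -/
noncomputable def xfam (κ : Itype r n N p μ) : (Fin (r * n) → Fin N) → ℂ :=
  fun f => ∏ b, wfun n N p (κ.1 b) (blockOf r n f b)

/-- Transport along the block decomposition. -/
noncomputable def Phi (hn : 0 < n) :
    ((Fin r → Fin n → Fin N) → ℂ) ≃ₗ[ℂ] ((Fin (r * n) → Fin N) → ℂ) :=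
  LinearEquiv.funCongrLeft ℂ ℂ (eGl r n N hn)

lemma Phi_apply (hn : 0 < n) (z : (Fin r → Fin n → Fin N) → ℂ) (f : Fin (r * n) → Fin N) :
    Phi r n N hn z f = z (blockOf r n f) := rfl

lemma Phi_mulT (hn : 0 < n) (y : Fin r → (Fin n → Fin N) → ℂ) :
    Phi r n N hn (mulT y) = fun f => ∏ b, y b (blockOf r n f b) := rfl

/-- `xfam` is the `Phi`-image of a local `mulT`. -/
lemma xfam_eq_Phi (hn : 0 < n) (κ : Itype r n N p μ) :
    xfam r n N p μ κ = Phi r n N hn (mulT (fun b => wfun n N p (κ.1 b))) := rfl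

/-- Key factorization: the tensor-power matrix acts block-wise. -/
lemma toLin_tensorPow (hn : 0 < n) (z : Fin r → (Fin n → Fin N) → ℂ) :
    Matrix.toLin' (tensorPowMatrix r n N p)
        (fun g => ∏ b, z b (blockOf r n g b)) =
      fun f => ∏ b, (Matrix.toLin' p (z b)) (blockOf r n f b) := by
  funext f
  rw [toLin'_point]
  rw [← Equiv.sum_comp (eGl r n N hn).symm
    (fun g => tensorPowMatrix r n N p f g * ∏ b, z b (blockOf r n g b))]
  have hstep : ∀ G : Fin r → Fin n → Fin N,
      tensorPowMatrix r n N p f ((eGl r n N hn).symm G) *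
          (∏ b, z b (blockOf r n ((eGl r n N hn).symm G) b))
        = ∏ b, (p (blockOf r n f b) (G b) * z b (G b)) := by
    intro G
    show (∏ b, p (blockOf r n f b) (blockOf r n ((eGl r n N hn).symm G) b)) *
        (∏ b, z b (blockOf r n ((eGl r n N hn).symm G) b)) = _
    rw [blockOf_eGl_symm hn G, ← Finset.prod_mul_distrib]
  rw [Finset.sum_congr rfl fun G _ => hstep G]
  have hR : (∏ b, (Matrix.toLin' p) (z b) (blockOf r n f b))
      = ∑ G ∈ Fintype.piFinset (fun _ : Fin r => (Finset.univ : Finset (Fin n → Fin N))),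
          ∏ b, p (blockOf r n f b) (G b) * z b (G b) := by
    have h1 : ∀ b : Fin r, (Matrix.toLin' p) (z b) (blockOf r n f b)
        = ∑ h : Fin n → Fin N, p (blockOf r n f b) h * z b h := fun b => by
      rw [toLin'_point]
    rw [Finset.prod_congr rfl fun b _ => h1 b, Finset.prod_univ_sum]
  rw [hR, Fintype.piFinset_univ]

/-- The generators belong to the intersection. -/
lemma xfam_mem (hn : 0 < n) (hμ : ∑ j, μ j = r * n) (κ : Itype r n N p μ) :
    xfam r n N p μ κ ∈
      LinearMap.range (Matrix.toLin' (tensorPowMatrix r n N p)) ⊓ wtSpace (r * n) N μ := by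
  rw [Submodule.mem_inf]
  constructor
  · -- in the range
    have hz : ∀ b : Fin r, ∃ z : (Fin n → Fin N) → ℂ,
        Matrix.toLin' p z = wfun n N p (κ.1 b) := fun b => wfun_mem_range n N p (κ.1 b)
    choose z hzz using hz
    refine ⟨fun g => ∏ b, z b (blockOf r n g b), ?_⟩
    rw [toLin_tensorPow r n N p hn z]
    funext f
    exact Finset.prod_congr rfl fun b _ => by rw [hzz b]
  · -- in the weight space
    rw [wtSpace_eq_suppSub, mem_suppSub]
    intro f hf
    by_contra h0
    have hwt : ∀ b : Fin r, (weightOf (blockOf r n f b) : Fin N → ℕ) = (κ.1 b).1.1 := by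
      intro b
      by_contra hb
      exact h0 (by
        show (∏ b, wfun n N p (κ.1 b) (blockOf r n f b)) = 0
        exact Finset.prod_eq_zero (Finset.mem_univ b)
          (wfun_supp n N p (κ.1 b) _ hb))
    refine hf fun j => ?_
    rw [weightOf_blocks hn f j]
    have := κ.2
    calc (∑ b : Fin r, weightOf (blockOf r n f b) j)
        = ∑ b : Fin r, ((κ.1 b).1.1 : Fin N → ℕ) j := by
          exact Finset.sum_congr rfl fun b _ => by rw [hwt b]
      _ = μ j := by
          have h2 := congrFun κ.2 j
          rw [Finset.sum_apply] at h2
          exact h2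

/-- Spanning: the intersection is contained in the span of the `xfam`. -/
lemma span_ge (hn : 0 < n) (hμ : ∑ j, μ j = r * n) :
    LinearMap.range (Matrix.toLin' (tensorPowMatrix r n N p)) ⊓ wtSpace (r * n) N μ ≤
      Submodule.span ℂ (Set.range (xfam r n N p μ)) := by
  classical
  intro x hx
  rw [Submodule.mem_inf] at hx
  obtain ⟨⟨zx, hzx⟩, hxw⟩ := hx
  rw [wtSpace_eq_suppSub, mem_suppSub] at hxw
  set loc : Itype r n N p μ → ((Fin r → (Fin n → Fin N)) → ℂ) :=
    fun κ => mulT (fun b => wfun n N p (κ.1 b)) with hloc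
  set SL := Submodule.span ℂ (Set.range loc) with hSL
  set xt : (Fin r → (Fin n → Fin N)) → ℂ := fun F => x ((eGl r n N hn).symm F) with hxt
  have hxPhi : x = Phi r n N hn xt := by
    funext f
    rw [Phi_apply]
    show x f = x ((eGl r n N hn).symm (blockOf r n f))
    rw [← eGl_apply hn f, Equiv.symm_apply_apply]
  -- slices
  set xslice : (Fin r → (Fin N → ℕ)) → ((Fin r → (Fin n → Fin N)) → ℂ) :=
    fun ν F => if (fun b => (weightOf (F b) : Fin N → ℕ)) = ν then xt F else 0 with hxslice
  set Vfin : Finset (Fin r → (Fin N → ℕ)) :=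
    Finset.image (fun F : Fin r → (Fin n → Fin N) => fun b => (weightOf (F b) : Fin N → ℕ))
      Finset.univ with hVfin
  have stepA : xt = ∑ ν ∈ Vfin, xslice ν := by
    funext F
    rw [Finset.sum_apply]
    rw [Finset.sum_eq_single_of_mem (fun b => (weightOf (F b) : Fin N → ℕ))
      (Finset.mem_image_of_mem _ (Finset.mem_univ F))
      (fun ν _ hν => by
        show (if (fun b => (weightOf (F b) : Fin N → ℕ)) = ν then xt F else 0) = 0
        exact if_neg (fun hc => hν hc.symm))]
    show xt F = (if (fun b => (weightOf (F b) : Fin N → ℕ))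
        = (fun b => (weightOf (F b) : Fin N → ℕ)) then xt F else 0)
    rw [if_pos rfl]
  -- each slice is in SL
  have stepB : ∀ ν ∈ Vfin, xslice ν ∈ SL := by
    intro ν hν
    by_cases hsum : (∑ b, ν b : Fin N → ℕ) = μ
    · -- column membership
      have hcolmem : ∀ (b : Fin r) (G : Fin r → (Fin n → Fin N)),
          (fun h => xslice ν (Function.update G b h)) ∈ Bsub n N p (ν b) := by
        intro b G
        unfold Bsub
        rw [Submodule.mem_inf]
        constructor
        · -- in the range of p
          by_cases hG : ∀ b', b' ≠ b → (weightOf (G b') : Fin N → ℕ) = ν b'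
          · -- the column equals x evaluated, hence a p-image
            have hcoleq : ∀ h : (Fin n → Fin N), xslice ν (Function.update G b h)
                = x ((eGl r n N hn).symm (Function.update G b h)) := by
              intro h
              by_cases hwb : (weightOf h : Fin N → ℕ) = ν b
              · have hcond : (fun b'' => (weightOf ((Function.update G b h) b'') : Fin N → ℕ))
                    = ν := by
                  funext b''
                  by_cases hb'' : b'' = b
                  · subst hb''; rw [Function.update_self]; exact hwb
                  · rw [Function.update_of_ne hb'']; exact hG b'' hb''
                show (if _ = ν then _ else _) = _
                rw [if_pos hcond]
              · have hcond : ¬((fun b'' => (weightOf ((Function.update G b h) b'') : Fin N → ℕ))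
                    = ν) := by
                  intro hc
                  exact hwb (by have := congrFun hc b; rwa [Function.update_self] at this)
                show (if _ = ν then _ else _) = _
                rw [if_neg hcond]
                symm
                obtain ⟨j0, hj0⟩ := Function.ne_iff.mp hwb
                apply hxw
                intro hall
                have hj := hall j0
                rw [weightOf_blocks hn _ j0] at hj
                rw [Finset.sum_congr rfl (fun b'' _ => by
                  rw [congrFun (blockOf_eGl_symm hn (Function.update G b h)) b''])] at hj
                have h2 := congrFun hsum j0
                rw [Finset.sum_apply] at h2
                rw [← Finset.add_sum_erase _ _ (Finset.mem_univ b)] at h2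
                rw [← Finset.add_sum_erase _ _ (Finset.mem_univ b), Function.update_self] at hj
                have herase : (∑ b'' ∈ Finset.univ.erase b,
                    weightOf ((Function.update G b h) b'') j0)
                    = ∑ b'' ∈ Finset.univ.erase b, (ν b'' : Fin N → ℕ) j0 := by
                  refine Finset.sum_congr rfl fun b'' hb'' => ?_
                  rw [Function.update_of_ne (Finset.ne_of_mem_erase hb'')]
                  rw [hG b'' (Finset.ne_of_mem_erase hb'')]
                rw [herase] at hj
                exact hj0 (by omega)
            -- now exhibit the preimage
            set ζ : (Fin n → Fin N) → ℂ := fun d => ∑ G' : Fin r → (Fin n → Fin N),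
              (if G' b = d then (∏ b' ∈ Finset.univ.erase b, p (G b') (G' b')) *
                zx ((eGl r n N hn).symm G') else 0) with hζ
            refine ⟨ζ, ?_⟩
            funext h
            rw [toLin'_point, hcoleq h, ← hzx, toLin'_point]
            rw [← Equiv.sum_comp (eGl r n N hn).symm
              (fun g => tensorPowMatrix r n N p ((eGl r n N hn).symm (Function.update G b h)) g
                * zx g)]
            have hterm : ∀ G' : Fin r → (Fin n → Fin N),
                tensorPowMatrix r n N p ((eGl r n N hn).symm (Function.update G b h))
                    ((eGl r n N hn).symm G') * zx ((eGl r n N hn).symm G')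
                = p h (G' b) * ((∏ b' ∈ Finset.univ.erase b, p (G b') (G' b')) *
                    zx ((eGl r n N hn).symm G')) := by
              intro G'
              have hmx : tensorPowMatrix r n N p ((eGl r n N hn).symm (Function.update G b h))
                  ((eGl r n N hn).symm G')
                  = ∏ b'', p ((Function.update G b h) b'') (G' b'') := by
                show (∏ b'', p (blockOf r n ((eGl r n N hn).symm (Function.update G b h)) b'')
                    (blockOf r n ((eGl r n N hn).symm G') b'')) = _
                rw [blockOf_eGl_symm hn, blockOf_eGl_symm hn]
              rw [hmx, ← Finset.mul_prod_erase _ _ (Finset.mem_univ b), Function.update_self]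
              rw [Finset.prod_congr rfl (fun b'' hb'' =>
                by rw [Function.update_of_ne (Finset.ne_of_mem_erase hb'')])]
              ring
            rw [Finset.sum_congr rfl fun G' _ => hterm G']
            -- now compute the ζ-side
            simp only [hζ, Finset.mul_sum]
            rw [Finset.sum_comm]
            refine Finset.sum_congr rfl fun G' _ => ?_
            rw [Finset.sum_congr rfl (fun d _ => by rw [mul_ite, mul_zero])]
            rw [Finset.sum_ite_eq Finset.univ (G' b)]
            rw [if_pos (Finset.mem_univ _)]
          · -- the column is zero
            obtain ⟨b', hb'⟩ := not_forall.mp hG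
            obtain ⟨hb'b, hb'w⟩ := Classical.not_imp.mp hb'
            have : (fun h => xslice ν (Function.update G b h)) = 0 := by
              funext h
              show (if _ = ν then _ else _) = _
              rw [if_neg, Pi.zero_apply]
              intro hc
              have := congrFun hc b'
              rw [Function.update_of_ne hb'b] at this
              exact hb'w this
            rw [this]
            exact Submodule.zero_mem _
        · -- in the weight space
          rw [wtSpace_eq_suppSub, mem_suppSub]
          intro h hh
          show (if _ = ν then _ else _) = 0
          rw [if_neg]
          intro hc
          have := congrFun hc b
          rw [Function.update_self] at this
          exact hh fun j => congrFun this j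
      -- apply the column lemma
      have hspan := mem_span_mulT (fun b => Bsub n N p (ν b)) (xslice ν) hcolmem
      -- the generators are in SL
      refine Submodule.span_le.mpr ?_ hspan
      rintro _ ⟨y, hy, rfl⟩
      -- ν b is realizable
      have hνWt : ∀ b, ν b ∈ Wt n N := by
        obtain ⟨F0, _, hF0⟩ := Finset.mem_image.mp hν
        intro b
        rw [← hF0]
        exact Finset.mem_image_of_mem _ (Finset.mem_univ (F0 b))
      set c : ∀ b : Fin r, Fin (dd n N p (ν b)) → ℂ :=
        fun b k => ((Module.finBasis ℂ (Bsub n N p (ν b))).repr ⟨y b, hy b⟩) k with hc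
      have hyb : ∀ b, y b = ∑ k, c b k • wfun n N p ⟨⟨ν b, hνWt b⟩, k⟩ := by
        intro b
        have hrepr := (Module.finBasis ℂ (Bsub n N p (ν b))).sum_repr ⟨y b, hy b⟩
        have h2 := congrArg (fun v : Bsub n N p (ν b) => (v : (Fin n → Fin N) → ℂ)) hrepr
        simp only [AddSubmonoidClass.coe_finset_sum, SetLike.val_smul] at h2
        exact h2.symm
      rw [show y = fun b => ∑ k, c b k • wfun n N p ⟨⟨ν b, hνWt b⟩, k⟩ from
        funext fun b => hyb b]
      rw [mulT_expand]
      apply Submodule.sum_mem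
      intro ks _
      apply Submodule.smul_mem
      apply Submodule.subset_span
      exact ⟨⟨fun b => ⟨⟨ν b, hνWt b⟩, ks b⟩, hsum⟩, rfl⟩
    · -- sum mismatch: the slice is zero
      have : xslice ν = 0 := by
        funext F
        show (if _ = ν then _ else _) = _
        by_cases hc : (fun b => (weightOf (F b) : Fin N → ℕ)) = ν
        · rw [if_pos hc, Pi.zero_apply, hxt]
          apply hxw
          intro hall
          apply hsum
          funext j
          rw [Finset.sum_apply]
          have hj := hall j
          rw [weightOf_blocks hn _ j] at hj
          rw [← hj]
          refine Finset.sum_congr rfl fun b _ => ?_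
          rw [congrFun (blockOf_eGl_symm hn F) b, congrFun hc b]
        · rw [if_neg hc, Pi.zero_apply]
      rw [this]
      exact Submodule.zero_mem _
  -- conclude
  have hxt_mem : xt ∈ SL := by
    rw [stepA]
    exact Submodule.sum_mem _ fun ν hν => stepB ν hν
  have hmap : x ∈ Submodule.map (Phi r n N hn).toLinearMap SL :=
    ⟨xt, hxt_mem, hxPhi.symm⟩
  rw [hSL, Submodule.map_span, ← Set.range_comp, LinearEquiv.coe_coe] at hmap
  have hcomp : (⇑(Phi r n N hn)) ∘ loc = xfam r n N p μ :=
    funext fun κ => (xfam_eq_Phi r n N p μ hn κ).symm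
  rwa [hcomp] at hmap

/-- Full independence of the family. -/
lemma xfam_indep (hn : 0 < n) : LinearIndependent ℂ (xfam r n N p μ) := by
  have h1 := linearIndependent_mulT (ι := Fin r) (wfun n N p) (wfun_indep n N p)
  have h2 := h1.comp (Subtype.val : Itype r n N p μ → (Fin r → Ktype n N p))
    Subtype.val_injective
  have h3 := h2.map' (Phi r n N hn).toLinearMap (LinearEquiv.ker _)
  have hfun : (⇑(Phi r n N hn).toLinearMap) ∘
      ((fun k : Fin r → Ktype n N p => mulT fun b => wfun n N p (k b)) ∘
        (Subtype.val : Itype r n N p μ → (Fin r → Ktype n N p)))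
      = xfam r n N p μ :=
    funext fun κ => (xfam_eq_Phi r n N p μ hn κ).symm
  rwa [hfun] at h3

/-- The shift on the index type. -/
def shiftI [NeZero r] (κ : Itype r n N p μ) : Itype r n N p μ :=
  ⟨fun b => κ.1 (b - 1),
    (Equiv.sum_comp (Equiv.subRight (1 : Fin r))
      (fun b => ((κ.1 b).1.1 : Fin N → ℕ))).trans κ.2⟩

lemma blockOf_cshift [NeZero r] (hr : 0 < r) (hn : 0 < n) (f : Fin (r * n) → Fin N)
    (b : Fin r) :
    blockOf r n (fun a => f (cshift r n (Nat.mul_pos hr hn) a)) b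
      = blockOf r n f (b + 1) := by
  funext i
  show f (cshift r n (Nat.mul_pos hr hn) (blockIdx r n b i)) = f (blockIdx r n (b + 1) i)
  rw [cshift_blockIdx hr hn]
  congr 2

/-- The operator `τ` permutes the family along `shiftI`. -/
lemma tau_xfam [NeZero r] (hr : 0 < r) (hn : 0 < n) (κ : Itype r n N p μ) :
    tauOp r n N (Nat.mul_pos hr hn) (xfam r n N p μ κ)
      = xfam r n N p μ (shiftI r n N p μ κ) := by
  funext f
  show xfam r n N p μ κ (f ∘ cshift r n (Nat.mul_pos hr hn)) = _
  unfold xfam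
  rw [Finset.prod_congr rfl (fun b _ => by
    rw [show blockOf r n (f ∘ cshift r n (Nat.mul_pos hr hn)) b = blockOf r n f (b + 1) from
      blockOf_cshift r n N hr hn f b])]
  have hterm : ∀ b : Fin r, wfun n N p (κ.1 b) (blockOf r n f (b + 1))
      = (fun b' => wfun n N p ((shiftI r n N p μ κ).1 b') (blockOf r n f b'))
          ((Equiv.addRight (1 : Fin r)) b) := by
    intro b
    show wfun n N p (κ.1 b) (blockOf r n f (b + 1))
      = wfun n N p (κ.1 (b + 1 - 1)) (blockOf r n f (b + 1))
    rw [add_sub_cancel_right]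
  rw [Finset.prod_congr rfl fun b _ => hterm b]
  exact Equiv.prod_comp (Equiv.addRight (1 : Fin r))
    (fun b' => wfun n N p ((shiftI r n N p μ κ).1 b') (blockOf r n f b'))

open Fin.NatCast in
/-- Constancy from shift-invariance. -/
lemma shift_fixed_const [NeZero r] {α : Type*} (g : Fin r → α)
    (hg : ∀ b, g (b - 1) = g b) : ∀ b, g b = g 0 := by
  have h1 : ∀ m : ℕ, g (m : Fin r) = g 0 := by
    intro m
    induction m with
    | zero => norm_num
    | succ k ih =>
      have h2 := hg ((k : Fin r) + 1)
      rw [add_sub_cancel_right] at h2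
      rw [show ((k + 1 : ℕ) : Fin r) = (k : Fin r) + 1 by push_cast; ring, ← h2, ih]
  intro b
  have := h1 b.val
  rwa [Fin.cast_val_eq_self b] at this

end Main

/-- Let `p` be an idempotent acting on `V^{⊗n}` and `μ` a composition of `r·n`
with at most `N` parts.  The trace of the cyclic shift `τ` restricted to
`(p^{⊗r} V^{⊗rn}) ∩ M^μ` equals `dim (p V^{⊗n} ∩ M^{μ/r})` if `r` divides every
part of `μ`, and `0` otherwise. -/
theorem trace_cyclic_shift_weight_space (r n N : ℕ) (hr : 0 < r) (hn : 0 < n)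
    (p : Matrix (Fin n → Fin N) (Fin n → Fin N) ℂ) (hp : p * p = p)
    (μ : Fin N → ℕ) (hμ : ∑ j, μ j = r * n)
    (hinv : ∀ x ∈ LinearMap.range (Matrix.toLin' (tensorPowMatrix r n N p)) ⊓
        wtSpace (r * n) N μ,
      tauOp r n N (Nat.mul_pos hr hn) x ∈
        LinearMap.range (Matrix.toLin' (tensorPowMatrix r n N p)) ⊓
          wtSpace (r * n) N μ) :
    LinearMap.trace ℂ _ ((tauOp r n N (Nat.mul_pos hr hn)).restrict hinv) =
      if ∀ j, r ∣ μ j then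
        (Module.finrank ℂ
          ↥(LinearMap.range (Matrix.toLin' p) ⊓ wtSpace n N (fun j => μ j / r)) : ℂ)
      else 0 := by
  classical
  haveI : NeZero r := ⟨hr.ne'⟩
  have hli := xfam_indep r n N p μ hn
  have hsp : Submodule.span ℂ (Set.range (xfam r n N p μ))
      = LinearMap.range (Matrix.toLin' (tensorPowMatrix r n N p)) ⊓ wtSpace (r * n) N μ :=
    le_antisymm
      (Submodule.span_le.mpr (Set.range_subset_iff.mpr fun κ => xfam_mem r n N p μ hn hμ κ))
      (span_ge r n N p μ hn hμ)
  set bY : Module.Basis (Itype r n N p μ) ℂ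
      ↥(LinearMap.range (Matrix.toLin' (tensorPowMatrix r n N p)) ⊓ wtSpace (r * n) N μ) :=
    (Module.Basis.span hli).map (LinearEquiv.ofEq _ _ hsp) with hbYdef
  have hbY : ∀ κ, ((bY κ : _) : (Fin (r * n) → Fin N) → ℂ) = xfam r n N p μ κ := by
    intro κ
    rw [hbYdef, Module.Basis.map_apply, LinearEquiv.coe_ofEq_apply, Module.Basis.span_apply]
  have hTb : ∀ κ, ((tauOp r n N (Nat.mul_pos hr hn)).restrict hinv) (bY κ)
      = bY (shiftI r n N p μ κ) := by
    intro κ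
    apply Subtype.ext
    rw [LinearMap.restrict_coe_apply, hbY, hbY]
    exact tau_xfam r n N p μ hr hn κ
  rw [LinearMap.trace_eq_matrix_trace ℂ bY, Matrix.trace]
  have hdiag : ∀ κ : Itype r n N p μ,
      Matrix.diag (LinearMap.toMatrix bY bY ((tauOp r n N (Nat.mul_pos hr hn)).restrict hinv)) κ
        = if shiftI r n N p μ κ = κ then 1 else 0 := by
    intro κ
    rw [Matrix.diag_apply, LinearMap.toMatrix_apply, hTb κ, Module.Basis.repr_self_apply]
  rw [Finset.sum_congr rfl fun κ _ => hdiag κ, Finset.sum_boole]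
  -- counting
  by_cases hdvd : ∀ j, r ∣ μ j
  · rw [if_pos hdvd]
    have hcard1 : (Finset.univ.filter (fun κ : Itype r n N p μ => shiftI r n N p μ κ = κ)).card
        = (Finset.univ.filter
            (fun k0 : Ktype n N p => r • (k0.1.1 : Fin N → ℕ) = μ)).card := by
      apply Finset.card_bij (fun κ _ => κ.1 0)
      · intro κ hκ
        rw [Finset.mem_filter] at hκ
        have hconst : ∀ b, κ.1 b = κ.1 0 := by
          apply shift_fixed_const
          intro b
          exact congrFun (congrArg Subtype.val hκ.2) b
        rw [Finset.mem_filter]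
        refine ⟨Finset.mem_univ _, ?_⟩
        have h2 : ∑ b : Fin r, ((κ.1 b).1.1 : Fin N → ℕ) = μ := κ.2
        rw [Finset.sum_congr rfl (fun b _ => by rw [hconst b])] at h2
        rw [Finset.sum_const, Finset.card_univ, Fintype.card_fin] at h2
        exact h2
      · intro κ hκ κ' hκ' heq
        rw [Finset.mem_filter] at hκ hκ'
        have hconst : ∀ b, κ.1 b = κ.1 0 :=
          shift_fixed_const _ _ (fun b => congrFun (congrArg Subtype.val hκ.2) b)
        have hconst' : ∀ b, κ'.1 b = κ'.1 0 :=
          shift_fixed_const _ _ (fun b => congrFun (congrArg Subtype.val hκ'.2) b)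
        apply Subtype.ext
        funext b
        rw [hconst b, hconst' b, heq]
      · intro k0 hk0
        rw [Finset.mem_filter] at hk0
        have hsum : ∑ b : Fin r, ((k0 : Ktype n N p).1.1 : Fin N → ℕ) = μ := by
          rw [Finset.sum_const, Finset.card_univ, Fintype.card_fin]
          exact hk0.2
        refine ⟨⟨fun _ => k0, hsum⟩, ?_, rfl⟩
        rw [Finset.mem_filter]
        exact ⟨Finset.mem_univ _, rfl⟩
    rw [hcard1]
    have hrc : r • (fun j => μ j / r : Fin N → ℕ) = μ := by
      funext j
      show r * (μ j / r) = μ j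
      exact Nat.mul_div_cancel' (hdvd j) 
    by_cases hcw : (fun j => μ j / r : Fin N → ℕ) ∈ Wt n N
    · -- count the fiber
      have hcount : (Finset.univ.filter
          (fun k0 : Ktype n N p => r • (k0.1.1 : Fin N → ℕ) = μ)).card
          = dd n N p (fun j => μ j / r) := by
        rw [Finset.card_filter]
        rw [← Finset.univ_sigma_univ, Finset.sum_sigma]
        have hiff : ∀ γ' : {γ : Fin N → ℕ // γ ∈ Wt n N},
            (r • (γ'.1 : Fin N → ℕ) = μ) ↔ γ' = ⟨fun j => μ j / r, hcw⟩ := by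
          intro γ'
          constructor
          · intro h
            apply Subtype.ext
            funext j
            have h3 : r * ((γ'.1 : Fin N → ℕ) j) = μ j := by
              simpa [mul_comm] using congrFun h j
            show (γ'.1 : Fin N → ℕ) j = μ j / r
            rw [← h3, Nat.mul_div_cancel_left _ hr]
          · intro h; rw [h]; exact hrc
        have hinner : ∀ γ' : {γ : Fin N → ℕ // γ ∈ Wt n N},
            (∑ _m : Fin (dd n N p γ'.1),
              if r • (γ'.1 : Fin N → ℕ) = μ then (1 : ℕ) else 0)
            = if γ' = ⟨fun j => μ j / r, hcw⟩ then dd n N p γ'.1 else 0 := by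
          intro γ'
          rw [Finset.sum_const, Finset.card_univ, Fintype.card_fin]
          by_cases hc : r • (γ'.1 : Fin N → ℕ) = μ
          · rw [if_pos hc, if_pos ((hiff γ').mp hc)]; simp
          · rw [if_neg hc, if_neg (fun he => hc ((hiff γ').mpr he))]; simp
        rw [Finset.sum_congr rfl fun γ' _ => hinner γ']
        rw [Finset.sum_ite_eq' Finset.univ (⟨fun j => μ j / r, hcw⟩ :
          {γ : Fin N → ℕ // γ ∈ Wt n N}) (fun γ' => dd n N p γ'.1)]
        rw [if_pos (Finset.mem_univ _)]
      rw [hcount]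
      rfl
    · -- degenerate: weight not realizable, both sides 0
      have hempty : (Finset.univ.filter
          (fun k0 : Ktype n N p => r • (k0.1.1 : Fin N → ℕ) = μ)) = ∅ := by
        rw [Finset.filter_eq_empty_iff]
        intro k0 _
        intro hc
        apply hcw
        have : (k0.1.1 : Fin N → ℕ) = fun j => μ j / r := by
          funext j
          have h3 : r * ((k0.1.1 : Fin N → ℕ) j) = μ j := by
            simpa [mul_comm] using congrFun hc j
          show (k0.1.1 : Fin N → ℕ) j = μ j / r
          rw [← h3, Nat.mul_div_cancel_left _ hr]
        rw [← this]
        exact k0.1.2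
      rw [hempty]
      have hbot : wtSpace n N (fun j => μ j / r) = ⊥ := by
        have hset : {f : Fin n → Fin N | ∀ j, weightOf f j = μ j / r} = ∅ := by
          rw [Set.eq_empty_iff_forall_notMem]
          intro f hf
          apply hcw
          have : (weightOf f : Fin N → ℕ) = fun j => μ j / r := funext hf
          rw [← this]
          exact Finset.mem_image_of_mem _ (Finset.mem_univ f)
        unfold wtSpace
        rw [hset, Set.image_empty, Submodule.span_empty]
      rw [hbot, inf_bot_eq, finrank_bot]
      simp
  · rw [if_neg hdvd]
    have hempty : (Finset.univ.filter
        (fun κ : Itype r n N p μ => shiftI r n N p μ κ = κ)) = ∅ := by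
      rw [Finset.filter_eq_empty_iff]
      intro κ _
      intro hfix
      apply hdvd
      intro j
      have hconst : ∀ b, κ.1 b = κ.1 0 :=
        shift_fixed_const _ _ (fun b => congrFun (congrArg Subtype.val hfix) b)
      have h2 : ∑ b : Fin r, ((κ.1 b).1.1 : Fin N → ℕ) = μ := κ.2
      rw [Finset.sum_congr rfl (fun b _ => by rw [hconst b])] at h2
      rw [Finset.sum_const, Finset.card_univ, Fintype.card_fin] at h2
      exact ⟨((κ.1 0).1.1 : Fin N → ℕ) j, (congrFun h2 j).symm⟩
    rw [hempty]
    simp
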